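/- arXiv:2402.08816 — 4 statements merged into one kernel-verified Lean document; each statement's English description precedes it below -/
import Mathlib

section
/- A graph G is split (its vertex set can be partitioned into a clique and an independent set) if and only if G contains no induced subgraph isomorphic to 2K₂, C₄, or C₅. -/
open SimpleGraph

/-- The graph `2K₂`: disjoint union of two edges, on 4 vertices. -/
def twoK2 : SimpleGraph (Fin 4) := SimpleGraph.fromEdgeSet {s(0,1), s(2,3)}

/-- The cycle `C₄` on 4 vertices. -/
def C4 : SimpleGraph (Fin 4) := SimpleGraph.fromEdgeSet {s(0,1), s(1,2), s(2,3), s(3,0)}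

/-- The cycle `C₅` on 5 vertices. -/
def C5 : SimpleGraph (Fin 5) :=
  SimpleGraph.fromEdgeSet {s(0,1), s(1,2), s(2,3), s(3,4), s(4,0)}

/-- `A` is an independent set in `G`. -/
def IsIndep {V : Type*} (G : SimpleGraph V) (A : Set V) : Prop :=
  ∀ u ∈ A, ∀ v ∈ A, u ≠ v → ¬ G.Adj u v

/-- `G` is a split graph: its vertices partition into a clique and an independent set. -/
def IsSplit {V : Type*} (G : SimpleGraph V) : Prop :=
  ∃ A : Set V, G.IsClique A ∧ IsIndep G Aᶜ

/-- `G` contains an induced subgraph isomorphic to `H`. -/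
def HasInducedCopy {V W : Type*} (G : SimpleGraph V) (H : SimpleGraph W) : Prop :=
  ∃ U : Set V, Nonempty (H ≃g G.induce U)

/-! ### Boolean adjacency tables for the three obstructions -/

def R2 : Fin 4 → Fin 4 → Bool := fun i j =>
  decide ((s(i,j) = s((0:Fin 4),(1:Fin 4))) ∨ s(i,j) = s((2:Fin 4),(3:Fin 4))) && decide (i ≠ j)
def R4 : Fin 4 → Fin 4 → Bool := fun i j =>
  decide (s(i,j) = s((0:Fin 4),(1:Fin 4)) ∨ s(i,j) = s((1:Fin 4),(2:Fin 4)) ∨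
    s(i,j) = s((2:Fin 4),(3:Fin 4)) ∨ s(i,j) = s((3:Fin 4),(0:Fin 4))) && decide (i ≠ j)
def R5 : Fin 5 → Fin 5 → Bool := fun i j =>
  decide (s(i,j) = s((0:Fin 5),(1:Fin 5)) ∨ s(i,j) = s((1:Fin 5),(2:Fin 5)) ∨
    s(i,j) = s((2:Fin 5),(3:Fin 5)) ∨ s(i,j) = s((3:Fin 5),(4:Fin 5)) ∨
    s(i,j) = s((4:Fin 5),(0:Fin 5))) && decide (i ≠ j)

lemma twoK2_adj : ∀ i j, twoK2.Adj i j ↔ R2 i j = true := by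
  intro i j
  simp only [twoK2, SimpleGraph.fromEdgeSet_adj, Set.mem_insert_iff, Set.mem_singleton_iff, R2]
  revert i j; decide

lemma C4_adj : ∀ i j, C4.Adj i j ↔ R4 i j = true := by
  intro i j
  simp only [C4, SimpleGraph.fromEdgeSet_adj, Set.mem_insert_iff, Set.mem_singleton_iff, R4]
  revert i j; decide

lemma C5_adj : ∀ i j, C5.Adj i j ↔ R5 i j = true := by
  intro i j
  simp only [C5, SimpleGraph.fromEdgeSet_adj, Set.mem_insert_iff, Set.mem_singleton_iff, R5]
  revert i j; decide

/-! ### Induced copies via injections -/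

lemma copy_iff {V W : Type*} (G : SimpleGraph V) (H : SimpleGraph W) :
    HasInducedCopy G H ↔
      ∃ f : W → V, Function.Injective f ∧ ∀ i j, G.Adj (f i) (f j) ↔ H.Adj i j := by
  constructor
  · rintro ⟨U, ⟨e⟩⟩
    refine ⟨fun w => (e w : V), fun a b hab => e.injective (Subtype.ext hab), fun i j => ?_⟩
    rw [← e.map_rel_iff]; rfl
  · rintro ⟨f, hinj, hadj⟩
    refine ⟨Set.range f, ⟨⟨Equiv.ofInjective f hinj, fun {a b} => ?_⟩⟩⟩
    simp only [Equiv.ofInjective_apply, SimpleGraph.comap_adj, SimpleGraph.induce]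
    exact hadj a b

section Copies
variable {V : Type*} {G : SimpleGraph V}

lemma has2K2 {a b c d : V} (hab : G.Adj a b) (hcd : G.Adj c d)
    (hac : ¬G.Adj a c) (had : ¬G.Adj a d) (hbc : ¬G.Adj b c) (hbd : ¬G.Adj b d)
    (nac : a ≠ c) (nad : a ≠ d) (nbc : b ≠ c) (nbd : b ≠ d) :
    HasInducedCopy G twoK2 := by
  have nab := hab.ne
  have ncd := hcd.ne
  have hba := hab.symm
  have hdc := hcd.symm
  have hca : ¬G.Adj c a := fun h => hac h.symm
  have hda : ¬G.Adj d a := fun h => had h.symm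
  have hcb : ¬G.Adj c b := fun h => hbc h.symm
  have hdb : ¬G.Adj d b := fun h => hbd h.symm
  refine (copy_iff G twoK2).mpr ⟨![a,b,c,d], ?_, ?_⟩
  · intro i j hij
    fin_cases i <;> fin_cases j <;> simp_all
  · intro i j
    fin_cases i <;> fin_cases j <;> simp_all [twoK2_adj] <;> decide

lemma hasC4 {a b c d : V} (hab : G.Adj a b) (hbc : G.Adj b c) (hcd : G.Adj c d)
    (hda : G.Adj d a) (hac : ¬G.Adj a c) (hbd : ¬G.Adj b d)
    (nac : a ≠ c) (nbd : b ≠ d) :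
    HasInducedCopy G C4 := by
  have nab := hab.ne
  have nbc := hbc.ne
  have ncd := hcd.ne
  have nad := hda.ne.symm
  have hba := hab.symm
  have hcb := hbc.symm
  have hdc := hcd.symm
  have had := hda.symm
  have hca : ¬G.Adj c a := fun h => hac h.symm
  have hdb : ¬G.Adj d b := fun h => hbd h.symm
  refine (copy_iff G C4).mpr ⟨![a,b,c,d], ?_, ?_⟩
  · intro i j hij
    fin_cases i <;> fin_cases j <;> simp_all
  · intro i j
    fin_cases i <;> fin_cases j <;> simp_all [C4_adj] <;> decide

lemma hasC5 {a b c d e : V} (hab : G.Adj a b) (hbc : G.Adj b c) (hcd : G.Adj c d)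
    (hde : G.Adj d e) (hea : G.Adj e a)
    (hac : ¬G.Adj a c) (had : ¬G.Adj a d) (hbd : ¬G.Adj b d)
    (hbe : ¬G.Adj b e) (hce : ¬G.Adj c e)
    (nac : a ≠ c) (nad : a ≠ d) (nbd : b ≠ d) (nbe : b ≠ e) (nce : c ≠ e) :
    HasInducedCopy G C5 := by
  have nab := hab.ne
  have nbc := hbc.ne
  have ncd := hcd.ne
  have nde := hde.ne
  have nae := hea.ne.symm
  have hba := hab.symm
  have hcb := hbc.symm
  have hdc := hcd.symm
  have hed := hde.symm
  have hae := hea.symm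
  have hca : ¬G.Adj c a := fun h => hac h.symm
  have hda : ¬G.Adj d a := fun h => had h.symm
  have hdb : ¬G.Adj d b := fun h => hbd h.symm
  have heb : ¬G.Adj e b := fun h => hbe h.symm
  have hec : ¬G.Adj e c := fun h => hce h.symm
  refine (copy_iff G C5).mpr ⟨![a,b,c,d,e], ?_, ?_⟩
  · intro i j hij
    fin_cases i <;> fin_cases j <;> simp_all
  · intro i j
    fin_cases i <;> fin_cases j <;> simp_all [C5_adj] <;> decide

end Copies

/-! ### Forward direction -/

lemma forward_aux {V : Type*} {G : SimpleGraph V} {n : ℕ} {H : SimpleGraph (Fin n)}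
    {R : Fin n → Fin n → Bool} (hR : ∀ i j, H.Adj i j ↔ R i j = true)
    (hdec : ∀ g : Fin n → Bool,
      ¬((∀ i j, i ≠ j → g i = true → g j = true → R i j = true) ∧
        (∀ i j, R i j = true → (g i = true ∨ g j = true))))
    (hs : IsSplit G) : ¬ HasInducedCopy G H := by
  classical
  rintro hcopy
  obtain ⟨f, hinj, hadj⟩ := (copy_iff G H).mp hcopy
  obtain ⟨A, hcl, hind⟩ := hs
  refine hdec (fun i => decide (f i ∈ A)) ⟨?_, ?_⟩
  · intro i j hij hi hj
    rw [← hR, ← hadj]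
    exact hcl (of_decide_eq_true hi) (of_decide_eq_true hj) (fun h => hij (hinj h))
  · intro i j hRij
    by_contra hcon
    push_neg at hcon
    obtain ⟨hi, hj⟩ := hcon
    have hGa : G.Adj (f i) (f j) := (hadj i j).mpr ((hR i j).mpr hRij)
    have hAmi : f i ∉ A := by simpa using hi
    have hAmj : f j ∉ A := by simpa using hj
    exact hind (f i) hAmi (f j) hAmj hGa.ne hGa

/-! ### Main theorem -/

theorem split_iff_no_obstruction {V : Type*} [Fintype V] (G : SimpleGraph V) :
    IsSplit G ↔
      ¬ HasInducedCopy G twoK2 ∧ ¬ HasInducedCopy G C4 ∧ ¬ HasInducedCopy G C5 := by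
  constructor
  · intro hs
    refine ⟨forward_aux twoK2_adj (by decide) hs, forward_aux C4_adj (by decide) hs,
      forward_aux C5_adj (by decide) hs⟩
  · rintro ⟨h2, h4, h5⟩
    classical
    -- the finset of cliques
    set 𝒞 : Finset (Finset V) := Finset.univ.filter (fun K => G.IsClique (K : Set V)) with h𝒞
    have hmem𝒞 : ∀ K : Finset V, K ∈ 𝒞 ↔ G.IsClique (K : Set V) := by
      intro K; simp [h𝒞]
    have hemp : (∅ : Finset V) ∈ 𝒞 := by
      rw [hmem𝒞]; simp
    obtain ⟨K₀, hK₀, hmax₀⟩ := 𝒞.exists_max_image Finset.card ⟨∅, hemp⟩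
    set m : Finset V → ℕ :=
      fun K => ∑ w ∈ Kᶜ, (Finset.univ.filter (fun z => G.Adj w z)).card with hm
    set 𝒞' : Finset (Finset V) := 𝒞.filter (fun K => K₀.card ≤ K.card) with h𝒞'
    obtain ⟨K, hKmem, hmin⟩ := 𝒞'.exists_min_image m ⟨K₀, by rw [h𝒞']; simp [hK₀]⟩
    rw [h𝒞', Finset.mem_filter] at hKmem
    obtain ⟨hK𝒞, hKcard⟩ := hKmem
    have hKcl : G.IsClique (K : Set V) := (hmem𝒞 K).mp hK𝒞
    -- every vertex outside K has a non-neighbour inside K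
    have nonnbr : ∀ w, w ∉ K → ∃ x ∈ K, ¬ G.Adj x w := by
      intro w hw
      by_contra h
      push_neg at h
      have hcl' : G.IsClique ((insert w K : Finset V) : Set V) := by
        rw [Finset.coe_insert]
        exact hKcl.insert (fun b hb hne => (h b hb).symm)
      have hmem : insert w K ∈ 𝒞 := (hmem𝒞 _).mpr hcl'
      have := hmax₀ _ hmem
      rw [Finset.card_insert_of_notMem hw] at this
      omega
    -- degrees
    set d : V → ℕ := fun w => (Finset.univ.filter (fun z => G.Adj w z)).card with hd
    -- key lemma
    have key : ∀ u v : V, u ∉ K → v ∉ K → G.Adj u v →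
        (∀ z ∈ K, ¬G.Adj z u → ¬G.Adj z v) → False := by
      intro u v hu hv huv hsub
      obtain ⟨x, hxK, hxu⟩ := nonnbr u hu
      have hxv : ¬G.Adj x v := hsub x hxK hxu
      have nux : u ≠ x := fun h => hu (h ▸ hxK)
      have nvx : v ≠ x := fun h => hv (h ▸ hxK)
      -- u is adjacent to everything in K except x
      have hA : ∀ z ∈ K, z ≠ x → G.Adj z u := by
        intro z hz hzx
        by_contra hzu
        have hzv := hsub z hz hzu
        exact h2 (has2K2 huv (hKcl hxK hz (Ne.symm hzx))
          (fun h => hxu h.symm) (fun h => hzu h.symm)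
          (fun h => hxv h.symm) (fun h => hzv h.symm)
          nux (fun h => hu (h ▸ hz)) nvx (fun h => hv (h ▸ hz)))
      -- the exchanged clique
      set K' : Finset V := insert u (K.erase x) with hK'
      have hK'cl : G.IsClique (K' : Set V) := by
        rw [hK', Finset.coe_insert]
        refine (hKcl.subset ?_).insert ?_
        · rw [Finset.coe_erase]; exact Set.diff_subset
        · intro b hb hne
          rw [Finset.mem_coe, Finset.mem_erase] at hb
          exact (hA b hb.2 hb.1).symm
      have huK' : u ∉ K.erase x := fun h => hu (Finset.mem_of_mem_erase h)
      have hK'card : K'.card = K.card := by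
        rw [hK', Finset.card_insert_of_notMem huK', Finset.card_erase_of_mem hxK]
        have : 0 < K.card := Finset.card_pos.mpr ⟨x, hxK⟩
        omega
      have hK'mem : K' ∈ 𝒞' := by
        rw [h𝒞', Finset.mem_filter, hmem𝒞]
        exact ⟨hK'cl, by omega⟩
      have hmK : m K ≤ m K' := hmin K' hK'mem
      -- complement identity
      have hcompl : K'ᶜ = insert x (Kᶜ.erase u) := by
        ext z
        simp only [hK', Finset.mem_compl, Finset.mem_insert, Finset.mem_erase]
        constructor
        · intro h
          by_cases hzx : z = x
          · exact Or.inl hzx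
          · exact Or.inr ⟨fun hzu => h (Or.inl hzu), fun hzK => h (Or.inr ⟨hzx, hzK⟩)⟩
        · rintro (rfl | ⟨hzu, hzK⟩) h'
          · rcases h' with h1 | h2
            · exact nux h1.symm
            · exact h2.1 rfl
          · rcases h' with h1 | h2
            · exact hzu h1
            · exact hzK h2.2
      have hxKc : x ∉ Kᶜ.erase u := fun h => (Finset.mem_compl.mp (Finset.mem_of_mem_erase h)) hxK
      have huKc : u ∈ Kᶜ := Finset.mem_compl.mpr hu
      have hmK' : m K' = d x + ∑ w ∈ Kᶜ.erase u, d w := by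
        simp only [hm]
        rw [hcompl, Finset.sum_insert hxKc]
      have hmKeq : m K = ∑ w ∈ Kᶜ.erase u, d w + d u := by
        simp only [hm]
        rw [← Finset.sum_erase_add Kᶜ _ huKc]
      have hdux : d u ≤ d x := by omega
      -- split degrees with respect to K
      set Nu : Finset V := (Finset.univ.filter (fun z => G.Adj u z)).filter (fun z => z ∉ K)
        with hNu
      set Nx : Finset V := (Finset.univ.filter (fun z => G.Adj x z)).filter (fun z => z ∉ K)
        with hNx
      have hsplitu : ((Finset.univ.filter (fun z => G.Adj u z)).filter (fun z => z ∈ K)).card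
          + Nu.card = d u := by
        simp only [hNu, hd]
        exact Finset.card_filter_add_card_filter_not _
      have hsplitx : ((Finset.univ.filter (fun z => G.Adj x z)).filter (fun z => z ∈ K)).card
          + Nx.card = d x := by
        simp only [hNx, hd]
        exact Finset.card_filter_add_card_filter_not _
      have hinu : (Finset.univ.filter (fun z => G.Adj u z)).filter (fun z => z ∈ K)
          = K.erase x := by
        ext z
        simp only [Finset.mem_filter, Finset.mem_univ, true_and, Finset.mem_erase]
        constructor
        · rintro ⟨hadj, hzK⟩
          exact ⟨fun h => hxu (h ▸ hadj).symm, hzK⟩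
        · rintro ⟨hzx, hzK⟩
          exact ⟨(hA z hzK hzx).symm, hzK⟩
      have hinx : (Finset.univ.filter (fun z => G.Adj x z)).filter (fun z => z ∈ K)
          = K.erase x := by
        ext z
        simp only [Finset.mem_filter, Finset.mem_univ, true_and, Finset.mem_erase]
        constructor
        · rintro ⟨hadj, hzK⟩
          exact ⟨fun h => G.irrefl (h ▸ hadj), hzK⟩
        · rintro ⟨hzx, hzK⟩
          exact ⟨hKcl hxK hzK (fun h => hzx h.symm), hzK⟩
      have hNcard : Nu.card ≤ Nx.card := by
        rw [hinu] at hsplitu; rw [hinx] at hsplitx; omega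
      have hvNu : v ∈ Nu := by
        rw [hNu]; simp [huv, hv]
      have hvNx : v ∉ Nx := by
        rw [hNx]; simp [fun h => hxv h, hv]
      -- find w adjacent to x, non-adjacent to u, outside K
      have hex : ∃ w ∈ Nx, ¬ G.Adj u w := by
        by_contra h
        push_neg at h
        have hsubs : Nx ⊆ Nu.erase v := by
          intro w hw
          have hadjuw := h w hw
          have hw' := hw
          rw [hNx, Finset.mem_filter, Finset.mem_filter] at hw'
          rw [Finset.mem_erase]
          refine ⟨fun he => hvNx (he ▸ hw), ?_⟩
          rw [hNu, Finset.mem_filter, Finset.mem_filter]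
          exact ⟨⟨Finset.mem_univ _, hadjuw⟩, hw'.2⟩
        have h1 : Nx.card ≤ (Nu.erase v).card := Finset.card_le_card hsubs
        have h2' : (Nu.erase v).card = Nu.card - 1 := Finset.card_erase_of_mem hvNu
        have h3 : 0 < Nu.card := Finset.card_pos.mpr ⟨v, hvNu⟩
        omega
      obtain ⟨w, hwNx, hwu⟩ := hex
      have hxw : G.Adj x w := by
        rw [hNx, Finset.mem_filter, Finset.mem_filter] at hwNx
        exact hwNx.1.2
      have hwK : w ∉ K := by
        rw [hNx, Finset.mem_filter] at hwNx
        exact hwNx.2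
      have nwv : w ≠ v := fun h => hvNx (h ▸ hwNx)
      have nwu : w ≠ u := fun h => hxu (h ▸ hxw)
      by_cases hvw : G.Adj v w
      · by_cases hsub2 : ∀ z ∈ K, ¬G.Adj z w → ¬G.Adj z v
        · obtain ⟨y, hyK, hyw⟩ := nonnbr w hwK
          have hyv : ¬G.Adj y v := hsub2 y hyK hyw
          have hyx : y ≠ x := fun h => hyw (h ▸ hxw)
          have hyu : G.Adj y u := hA y hyK hyx
          exact h5 (hasC5 huv hvw hxw.symm (hKcl hxK hyK (Ne.symm hyx)) hyu
            hwu (fun h => hxu h.symm) (fun h => hxv h.symm)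
            (fun h => hyv h.symm) (fun h => hyw h.symm)
            nwu.symm nux nvx (fun h => hv (h ▸ hyK)) (fun h => hwK (h ▸ hyK)))
        · push_neg at hsub2
          obtain ⟨c, hcK, hcw, hcv⟩ := hsub2
          have hcx : c ≠ x := fun h => hcw (h ▸ hxw)
          exact h4 (hasC4 hvw hxw.symm (hKcl hxK hcK (Ne.symm hcx)) hcv
            (fun h => hxv h.symm) (fun h => hcw h.symm)
            nvx (fun h => hwK (h ▸ hcK)))
      · exact h2 (has2K2 huv hxw (fun h => hxu h.symm) hwu
          (fun h => hxv h.symm) hvw nux nwu.symm nvx nwv.symm)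
    -- conclude
    refine ⟨(K : Set V), hKcl, ?_⟩
    intro u hu v hv huv hadj
    have hu' : u ∉ K := fun h => hu (Finset.mem_coe.mpr h)
    have hv' : v ∉ K := fun h => hv (Finset.mem_coe.mpr h)
    by_cases hc : ∀ z ∈ K, ¬G.Adj z u → ¬G.Adj z v
    · exact key u v hu' hv' hadj hc
    by_cases hc' : ∀ z ∈ K, ¬G.Adj z v → ¬G.Adj z u
    · exact key v u hv' hu' hadj.symm hc'
    push_neg at hc hc'
    obtain ⟨x, hxK, hxu, hxv⟩ := hc
    obtain ⟨y, hyK, hyv, hyu⟩ := hc'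
    have hxy : x ≠ y := fun h => hyv (h ▸ hxv)
    exact h4 (hasC4 hadj hxv.symm (hKcl hxK hyK hxy) hyu
      (fun h => hxu h.symm) (fun h => hyv h.symm)
      (fun h => hu' (h ▸ hxK)) (fun h => hv' (h ▸ hyK)))
end

section
/- For a graph G on n vertices with degree sequence d₁ ≥ d₂ ≥ … ≥ dₙ, let m = max { i ∈ [n] : dᵢ ≥ i − 1 }. Then splittance(G) = ( m(m−1) − Σ_{i=1}^m dᵢ + Σ_{i=m+1}^n dᵢ ) / 2, and an optimal partition (A, B) certifying this is obtained by letting A be the m vertices of highest degree and B the rest. -/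
open SimpleGraph Finset

/-- `splittance_G(A, B)` where `B = Aᶜ`: the number of non-edges within `A`
plus the number of edges within `B` (ordered pairs counted, then halved). -/
def splittancePart {V : Type*} [Fintype V] [DecidableEq V] (G : SimpleGraph V)
    [DecidableRel G.Adj] (A : Finset V) : ℕ :=
  ((A.offDiag.filter fun p => ¬ G.Adj p.1 p.2).card
    + (Aᶜ.offDiag.filter fun p => G.Adj p.1 p.2).card) / 2

/-- `splittance(G)`: the minimum of `splittance_G(A, B)` over all partitions `(A, B)`. -/
noncomputable def splittance {V : Type*} [Fintype V] [DecidableEq V] (G : SimpleGraph V)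
    [DecidableRel G.Adj] : ℕ :=
  sInf { m : ℕ | ∃ A : Finset V, splittancePart G A = m }

section Helpers

variable {V : Type*} [Fintype V] [DecidableEq V] (G : SimpleGraph V) [DecidableRel G.Adj]

lemma hs_adj_offDiag_card (A : Finset V) :
    (A.offDiag.filter fun p => G.Adj p.1 p.2).card = ∑ v ∈ A, (A.filter (G.Adj v)).card := by
  have h1 : A.offDiag.filter (fun p => G.Adj p.1 p.2)
      = (A ×ˢ A).filter (fun p => G.Adj p.1 p.2) := by
    ext ⟨a, b⟩
    simp only [Finset.mem_filter, Finset.mem_offDiag, Finset.mem_product]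
    exact ⟨fun h => ⟨⟨h.1.1, h.1.2.1⟩, h.2⟩, fun h => ⟨⟨h.1.1, h.1.2, h.2.ne⟩, h.2⟩⟩
  rw [h1, Finset.card_filter, Finset.sum_product]
  congr 1; ext v; rw [Finset.card_filter]

lemma hs_filter_compl_card (A : Finset V) (v : V) :
    (A.filter (G.Adj v)).card + (Aᶜ.filter (G.Adj v)).card = G.degree v := by
  rw [← Finset.card_union_of_disjoint
    (Finset.disjoint_filter_filter (disjoint_compl_right))]
  rw [← Finset.filter_union, Finset.union_compl]
  rw [degree, neighborFinset_eq_filter]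

lemma hs_cross_symm (A : Finset V) :
    ∑ v ∈ A, (Aᶜ.filter (G.Adj v)).card = ∑ w ∈ Aᶜ, (A.filter (G.Adj w)).card := by
  simp only [Finset.card_filter]
  rw [Finset.sum_comm]
  simp [G.adj_comm]

lemma hs_key_identity (A : Finset V) :
    (((A.offDiag.filter fun p => ¬ G.Adj p.1 p.2).card
      + (Aᶜ.offDiag.filter fun p => G.Adj p.1 p.2).card : ℕ) : ℤ)
    = (A.card : ℤ) * ((A.card : ℤ) - 1) + ∑ v, (G.degree v : ℤ)
      - 2 * ∑ v ∈ A, (G.degree v : ℤ) := by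
  have hsplit : (A.offDiag.filter fun p => ¬ G.Adj p.1 p.2).card
      + (A.offDiag.filter fun p => G.Adj p.1 p.2).card = A.offDiag.card := by
    rw [add_comm]; exact Finset.card_filter_add_card_filter_not _
  have hoff : (A.offDiag.card : ℤ) = (A.card : ℤ) * ((A.card : ℤ) - 1) := by
    rw [Finset.offDiag_card]
    have hle : A.card ≤ A.card * A.card := by
      rcases Nat.eq_zero_or_pos A.card with h | h
      · simp [h]
      · exact Nat.le_mul_of_pos_left _ h
    push_cast [Nat.cast_sub hle]; ring
  have hdegA : ∑ v ∈ A, (G.degree v : ℤ)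
      = ∑ v ∈ A, ((A.filter (G.Adj v)).card : ℤ) + ∑ v ∈ A, ((Aᶜ.filter (G.Adj v)).card : ℤ) := by
    rw [← Finset.sum_add_distrib]
    refine Finset.sum_congr rfl fun v _ => ?_
    exact_mod_cast (hs_filter_compl_card G A v).symm
  have hdegB : ∑ v ∈ Aᶜ, (G.degree v : ℤ)
      = ∑ v ∈ Aᶜ, ((A.filter (G.Adj v)).card : ℤ)
        + ∑ v ∈ Aᶜ, ((Aᶜ.filter (G.Adj v)).card : ℤ) := by
    rw [← Finset.sum_add_distrib]
    refine Finset.sum_congr rfl fun v _ => ?_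
    exact_mod_cast (hs_filter_compl_card G A v).symm
  have hcross : ∑ v ∈ A, ((Aᶜ.filter (G.Adj v)).card : ℤ)
      = ∑ w ∈ Aᶜ, ((A.filter (G.Adj w)).card : ℤ) := by
    exact_mod_cast congrArg (Nat.cast : ℕ → ℤ) (hs_cross_symm G A)
  have hsumuniv : (∑ v, (G.degree v : ℤ))
      = ∑ v ∈ A, (G.degree v : ℤ) + ∑ v ∈ Aᶜ, (G.degree v : ℤ) :=
    (Finset.sum_add_sum_compl A _).symm
  have hsplitn : (A.offDiag.filter fun p => ¬ G.Adj p.1 p.2).card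
      + ∑ v ∈ A, (A.filter (G.Adj v)).card = A.offDiag.card := by
    rw [← hs_adj_offDiag_card]; exact hsplit
  have hsplit' : (((A.offDiag.filter fun p => ¬ G.Adj p.1 p.2).card : ℕ) : ℤ)
      + ∑ v ∈ A, ((A.filter (G.Adj v)).card : ℤ) = (A.offDiag.card : ℤ) := by
    exact_mod_cast congrArg (Nat.cast : ℕ → ℤ) hsplitn
  have hB' : (((Aᶜ.offDiag.filter fun p => G.Adj p.1 p.2).card : ℕ) : ℤ)
      = ∑ v ∈ Aᶜ, ((Aᶜ.filter (G.Adj v)).card : ℤ) := by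
    exact_mod_cast congrArg (Nat.cast : ℕ → ℤ) (hs_adj_offDiag_card G Aᶜ)
  push_cast
  push_cast at hsplit' hB'
  linarith [hsplit', hB', hdegA, hdegB, hcross, hsumuniv, hoff]

lemma hs_even_sum_degrees : Even (∑ v, (G.degree v : ℤ)) := by
  refine ⟨(G.edgeFinset.card : ℤ), ?_⟩
  have := G.sum_degrees_eq_twice_card_edges
  have h := congrArg (Nat.cast : ℕ → ℤ) this
  push_cast at h
  linarith

lemma hs_numerator_even (A : Finset V) :
    Even ((A.offDiag.filter fun p => ¬ G.Adj p.1 p.2).card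
      + (Aᶜ.offDiag.filter fun p => G.Adj p.1 p.2).card) := by
  rw [← Int.even_coe_nat]
  rw [hs_key_identity G A]
  have h1 : Even ((A.card : ℤ) * ((A.card : ℤ) - 1)) := by
    have h := Int.even_mul_succ_self ((A.card : ℤ) - 1)
    have h2 : ((A.card : ℤ) - 1) + 1 = (A.card : ℤ) := by ring
    rw [h2] at h
    rw [mul_comm]
    exact h
  exact (h1.add (hs_even_sum_degrees G)).sub (even_two_mul _)

lemma hs_two_mul_splittancePart (A : Finset V) :
    2 * (splittancePart G A : ℤ)
    = (A.card : ℤ) * ((A.card : ℤ) - 1) + ∑ v, (G.degree v : ℤ)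
      - 2 * ∑ v ∈ A, (G.degree v : ℤ) := by
  rw [← hs_key_identity G A]
  unfold splittancePart
  have h := (hs_numerator_even G A)
  obtain ⟨r, hr⟩ := h
  rw [hr]
  have : (r + r) / 2 = r := by omega
  rw [this]
  push_cast
  ring

end Helpers

lemma hs_le_orderEmbOfFin {n k : ℕ} (e : Fin k ↪o Fin n) (j : Fin k) :
    (j : ℕ) ≤ (e j : ℕ) := by
  suffices H : ∀ (v : ℕ) (j : Fin k), (j : ℕ) = v → v ≤ (e j : ℕ) from H _ j rfl
  intro v
  induction v with
  | zero => intro j _; exact Nat.zero_le _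
  | succ v ih =>
      intro j hj
      have hv : v < k := by omega
      have h1 := ih ⟨v, hv⟩ rfl
      have h2 : e ⟨v, hv⟩ < e j := e.strictMono (by rw [Fin.lt_def]; simp; omega)
      rw [Fin.lt_def] at h2; omega

lemma hs_filter_lt_eq_map {n k : ℕ} (hkn : k ≤ n) :
    Finset.univ.filter (fun i : Fin n => (i : ℕ) < k)
      = Finset.univ.map (Fin.castLEEmb hkn) := by
  ext x
  simp only [Finset.mem_filter, Finset.mem_univ, true_and, Finset.mem_map]
  constructor
  · intro hx; exact ⟨⟨(x : ℕ), hx⟩, by ext; simp⟩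
  · rintro ⟨j, rfl⟩; simpa using j.isLt

lemma hs_card_filter_lt {n k : ℕ} (hkn : k ≤ n) :
    (Finset.univ.filter (fun i : Fin n => (i : ℕ) < k)).card = k := by
  rw [hs_filter_lt_eq_map hkn, Finset.card_map, Finset.card_univ, Fintype.card_fin]

lemma hs_sum_le_top {n : ℕ} (f : Fin n → ℕ)
    (hf : ∀ i j : Fin n, i ≤ j → f j ≤ f i) (T : Finset (Fin n)) :
    ∑ i ∈ T, f i ≤ ∑ i ∈ Finset.univ.filter (fun i : Fin n => (i : ℕ) < T.card), f i := by
  have hkn : T.card ≤ n := by simpa using Finset.card_le_univ T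
  set e := T.orderEmbOfFin rfl with he
  have hT : T = Finset.univ.map e.toEmbedding := by
    ext x
    simp only [Finset.mem_map, Finset.mem_univ, true_and]
    constructor
    · intro hx
      have : x ∈ Set.range e := by rw [he, Finset.range_orderEmbOfFin]; exact hx
      obtain ⟨j, hj⟩ := this; exact ⟨j, hj⟩
    · rintro ⟨j, rfl⟩; exact Finset.orderEmbOfFin_mem T rfl j
  rw [hs_filter_lt_eq_map hkn]
  conv_lhs => rw [hT]
  rw [Finset.sum_map, Finset.sum_map]
  refine Finset.sum_le_sum fun j _ => ?_
  refine hf _ _ ?_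
  have := hs_le_orderEmbOfFin e j
  rw [Fin.le_def]
  simpa using this

/-- Hammer–Simeone: with vertices `σ 0, σ 1, …` ordered by non-increasing degree
(`0`-indexed, so the condition `d_i ≥ i - 1` of the `1`-indexed statement reads
`d i ≥ i`), and `m` the largest index with `d_m ≥ m - 1` (characterized by `hchar`),
the splittance equals `(m(m-1) - Σ_{i≤m} d_i + Σ_{i>m} d_i)/2`, and the partition
whose clique side consists of the `m` vertices of largest degree is optimal. -/
theorem splittance_degree_formula {n : ℕ} (G : SimpleGraph (Fin n)) [DecidableRel G.Adj]
    (σ : Equiv.Perm (Fin n))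
    (hsort : ∀ i j : Fin n, i ≤ j → G.degree (σ j) ≤ G.degree (σ i))
    (m : ℕ) (hm : m ≤ n)
    (hchar : ∀ i : Fin n, (i : ℕ) < m ↔ (i : ℕ) ≤ G.degree (σ i)) :
    2 * (splittance G : ℤ) =
        (m : ℤ) * ((m : ℤ) - 1)
          - ∑ i ∈ Finset.univ.filter (fun i : Fin n => (i : ℕ) < m), (G.degree (σ i) : ℤ)
          + ∑ i ∈ Finset.univ.filter (fun i : Fin n => m ≤ (i : ℕ)), (G.degree (σ i) : ℤ)
      ∧ splittancePart G ((Finset.univ.filter (fun i : Fin n => (i : ℕ) < m)).image σ)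
          = splittance G := by
  classical
  set S : ℤ := ∑ v, (G.degree v : ℤ) with hS
  set D : ℕ → ℤ := fun k =>
    ∑ i ∈ Finset.univ.filter (fun i : Fin n => (i : ℕ) < k), (G.degree (σ i) : ℤ) with hD
  set g : ℕ → ℤ := fun k => (k : ℤ) * ((k : ℤ) - 1) + S - 2 * D k with hg
  -- step formula
  have hDstep : ∀ (k : ℕ) (hk : k < n), D (k + 1) = D k + (G.degree (σ ⟨k, hk⟩) : ℤ) := by
    intro k hk
    have hins : Finset.univ.filter (fun i : Fin n => (i : ℕ) < k + 1)
        = insert (⟨k, hk⟩ : Fin n) (Finset.univ.filter (fun i : Fin n => (i : ℕ) < k)) := by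
      ext x
      simp only [Finset.mem_filter, Finset.mem_univ, true_and, Finset.mem_insert]
      constructor
      · intro hx
        rcases Nat.lt_succ_iff_lt_or_eq.mp hx with h | h
        · exact Or.inr h
        · exact Or.inl (Fin.ext h)
      · rintro (rfl | h)
        · simp
        · omega
    rw [hD]
    simp only
    rw [hins, Finset.sum_insert (by simp)]
    ring
  have hgstep : ∀ (k : ℕ) (hk : k < n),
      g (k + 1) = g k + 2 * ((k : ℤ) - (G.degree (σ ⟨k, hk⟩) : ℤ)) := by
    intro k hk
    rw [hg]
    simp only
    rw [hDstep k hk]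
    push_cast
    ring
  -- g is minimized at m
  have hgm : ∀ k, k ≤ n → g m ≤ g k := by
    intro k hk
    rcases le_or_gt k m with hkm | hkm
    · -- go from k up to m
      have H : ∀ j, k ≤ j → j ≤ m → g j ≤ g k := by
        intro j hkj
        induction j, hkj using Nat.le_induction with
        | base => intro _; exact le_rfl
        | succ j hkj ih =>
            intro hjm
            have hjm' : j < m := by omega
            have hjn : j < n := by omega
            have hd : j ≤ G.degree (σ ⟨j, hjn⟩) := (hchar ⟨j, hjn⟩).mp hjm'
            have := hgstep j hjn
            have h2 : g (j + 1) ≤ g j := by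
              rw [this]
              have : ((j : ℤ) - (G.degree (σ ⟨j, hjn⟩) : ℤ)) ≤ 0 := by
                have : (j : ℤ) ≤ (G.degree (σ ⟨j, hjn⟩) : ℤ) := by exact_mod_cast hd
                linarith
              linarith
            exact h2.trans (ih (by omega))
      exact H m hkm le_rfl
    · -- go from m up to k
      have H : ∀ j, m ≤ j → j ≤ n → g m ≤ g j := by
        intro j hmj
        induction j, hmj using Nat.le_induction with
        | base => intro _; exact le_rfl
        | succ j hmj ih =>
            intro hjn'
            have hjn : j < n := by omega
            have hd : G.degree (σ ⟨j, hjn⟩) < j := by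
              have := (hchar ⟨j, hjn⟩).not
              simp only [not_lt, not_le] at this
              exact this.mp hmj
            have h2 : g j ≤ g (j + 1) := by
              rw [hgstep j hjn]
              have : (0 : ℤ) ≤ (j : ℤ) - (G.degree (σ ⟨j, hjn⟩) : ℤ) := by
                have : (G.degree (σ ⟨j, hjn⟩) : ℤ) ≤ (j : ℤ) := by
                  exact_mod_cast hd.le
                linarith
              linarith
            exact (ih (by omega)).trans h2
      exact H k hkm.le hk
  -- the candidate set
  set A₀ := (Finset.univ.filter (fun i : Fin n => (i : ℕ) < m)).image σ with hA₀
  have hcardA₀ : A₀.card = m := by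
    rw [hA₀, Finset.card_image_of_injective _ σ.injective, hs_card_filter_lt hm]
  have hsumA₀ : ∑ v ∈ A₀, (G.degree v : ℤ) = D m := by
    rw [hA₀, Finset.sum_image]
    intro x _ y _ h
    exact σ.injective h
  have h2A₀ : 2 * (splittancePart G A₀ : ℤ) = g m := by
    rw [hs_two_mul_splittancePart, hcardA₀, hsumA₀, hg]
  -- arbitrary sets
  have hany : ∀ A : Finset (Fin n), g m ≤ 2 * (splittancePart G A : ℤ) := by
    intro A
    rw [hs_two_mul_splittancePart]
    have hcard : A.card ≤ n := by simpa using Finset.card_le_univ A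
    have hsum : ∑ v ∈ A, (G.degree v : ℤ) ≤ D A.card := by
      have hT : ∑ v ∈ A, G.degree v = ∑ i ∈ A.image σ.symm, G.degree (σ i) := by
        rw [Finset.sum_image (fun x _ y _ h => σ.symm.injective h)]
        refine Finset.sum_congr rfl fun v _ => ?_
        rw [Equiv.apply_symm_apply]
      have hTcard : (A.image σ.symm).card = A.card :=
        Finset.card_image_of_injective _ σ.symm.injective
      have := hs_sum_le_top (fun i => G.degree (σ i)) hsort (A.image σ.symm)
      rw [hTcard] at this
      rw [← hT] at this
      rw [hD]
      simp only
      calc ∑ v ∈ A, (G.degree v : ℤ) = ((∑ v ∈ A, G.degree v : ℕ) : ℤ) := by push_cast; rfl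
        _ ≤ _ := by exact_mod_cast this
    have := hgm A.card hcard
    rw [hg] at this
    simp only at this
    simp only [hg, ← hS]
    linarith
  -- optimality: splittancePart at A₀ is the min
  have hmin : splittancePart G A₀ = splittance G := by
    refine le_antisymm ?_ (Nat.sInf_le ⟨A₀, rfl⟩)
    refine le_csInf ⟨splittancePart G A₀, A₀, rfl⟩ ?_
    rintro x ⟨A, rfl⟩
    have h := (h2A₀ ▸ hany A)
    have : (splittancePart G A₀ : ℤ) ≤ (splittancePart G A : ℤ) := by linarith
    exact_mod_cast this
  refine ⟨?_, hmin⟩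
  rw [← hmin, h2A₀, hg]
  simp only
  -- S = D m + Σ_{i ≥ m}
  have hSsplit : S = D m
      + ∑ i ∈ Finset.univ.filter (fun i : Fin n => m ≤ (i : ℕ)), (G.degree (σ i) : ℤ) := by
    rw [hS]
    have h1 : ∑ v, (G.degree v : ℤ) = ∑ i, (G.degree (σ i) : ℤ) :=
      (Equiv.sum_comp σ fun v => (G.degree v : ℤ)).symm
    rw [h1]
    rw [← Finset.sum_filter_add_sum_filter_not Finset.univ (fun i : Fin n => (i : ℕ) < m)]
    congr 1
    refine Finset.sum_congr ?_ fun _ _ => rfl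
    ext x
    simp [not_lt]
  rw [hSsplit, hD]
  simp only
  ring
end

section
/- The splittance of a graph G equals the minimum number of edge insertions and deletions needed to turn G into a split graph. -/
/-!
For a fixed candidate clique `A`, the split graph closest to `G` among those in which `A` is a
clique and its complement is independent is obtained by completing `A` and deleting every edge
outside `A`; the edits it needs are exactly the non-edges inside `A` and the edges inside `Aᶜ`,
whose number is `splittancePart G A`. Minimising over `A` on both sides gives the theorem.
-/

open SimpleGraph Finset

namespace SimpleGraph

variable {V : Type*}

theorem symmDiff_adj (G₁ G₂ : SimpleGraph V) (u v : V) :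
    (symmDiff G₁ G₂).Adj u v ↔ Xor (G₁.Adj u v) (G₂.Adj u v) := by
  simp only [symmDiff_def, sup_adj, sdiff_adj, Xor]

theorem edgeSet_symmDiff (G₁ G₂ : SimpleGraph V) :
    (symmDiff G₁ G₂).edgeSet = symmDiff G₁.edgeSet G₂.edgeSet := by
  simp only [symmDiff_def, edgeSet_sup, edgeSet_sdiff, Set.sup_eq_union]

def splitCompletion (G : SimpleGraph V) (A : Set V) : SimpleGraph V :=
  fromRel fun u v => u ∈ A ∧ (v ∈ A ∨ G.Adj u v)

theorem isSplit_splitCompletion (G : SimpleGraph V) (A : Set V) :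
    IsSplit (G.splitCompletion A) := by
  refine ⟨A, fun u hu v hv huv => ?_, fun u hu v hv _ huv => ?_⟩
  · exact (fromRel_adj _ u v).2 ⟨huv, .inl ⟨hu, .inl hv⟩⟩
  · obtain ⟨-, ⟨huA, -⟩ | ⟨hvA, -⟩⟩ := (fromRel_adj _ u v).1 huv
    exacts [hu huA, hv hvA]

theorem symmDiff_splitCompletion_adj (G : SimpleGraph V) (A : Set V) (u v : V) :
    (symmDiff G (G.splitCompletion A)).Adj u v ↔
      u ≠ v ∧ (u ∈ A ∧ v ∈ A ∧ ¬ G.Adj u v ∨ u ∉ A ∧ v ∉ A ∧ G.Adj u v) := by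
  rw [symmDiff_adj, splitCompletion, fromRel_adj]
  have hne := G.ne_of_adj (a := u) (b := v)
  by_cases hu : u ∈ A <;> by_cases hv : v ∈ A <;>
    simp only [hu, hv, G.adj_comm v u, Xor] <;> tauto

theorem symmDiff_splitCompletion_le {G G' : SimpleGraph V} {A : Set V}
    (hA : G'.IsClique A) (hAc : IsIndep G' Aᶜ) :
    symmDiff G (G.splitCompletion A) ≤ symmDiff G G' := by
  intro u v huv
  rw [symmDiff_splitCompletion_adj] at huv
  rw [symmDiff_adj]
  obtain ⟨hne, ⟨hu, hv, hG⟩ | ⟨hu, hv, hG⟩⟩ := huv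
  · exact .inr ⟨hA hu hv hne, hG⟩
  · exact .inl ⟨hG, hAc u hu v hv hne⟩

theorem splittancePart_eq_ncard [Fintype V] [DecidableEq V] (G : SimpleGraph V)
    [DecidableRel G.Adj] (A : Finset V) :
    splittancePart G A = (symmDiff G (G.splitCompletion A)).edgeSet.ncard := by
  classical
  set H := symmDiff G (G.splitCompletion A)
  have hpairs : (univ.filter fun (u, v) => H.Adj u v)
      = (A.offDiag.filter fun p => ¬ G.Adj p.1 p.2)
        ∪ (Aᶜ.offDiag.filter fun p => G.Adj p.1 p.2) := by
    ext ⟨u, v⟩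
    simp only [H, symmDiff_splitCompletion_adj, mem_filter, mem_union, mem_offDiag, mem_univ,
      mem_compl, mem_coe, true_and]
    tauto
  have hdisj : Disjoint (A.offDiag.filter fun p => ¬ G.Adj p.1 p.2)
      (Aᶜ.offDiag.filter fun p => G.Adj p.1 p.2) :=
    disjoint_filter_filter <| Finset.disjoint_left.2 fun _ h h' =>
      (mem_compl.1 (mem_offDiag.1 h').1) (mem_offDiag.1 h).1
  have hcount := H.two_mul_card_edgeFinset
  rw [hpairs, card_union_of_disjoint hdisj] at hcount
  rw [← coe_edgeFinset, Set.ncard_coe_finset, splittancePart]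
  omega

end SimpleGraph

/-- The splittance of `G` equals the minimum number of edge insertions and deletions
(i.e. the size of the symmetric difference of edge sets) needed to turn `G` into a
split graph. -/
theorem splittance_eq_min_edits {V : Type*} [Fintype V] [DecidableEq V]
    (G : SimpleGraph V) [DecidableRel G.Adj] :
    splittance G =
      sInf { r : ℕ | ∃ G' : SimpleGraph V, IsSplit G' ∧
        (symmDiff G.edgeSet G'.edgeSet).ncard = r } := by
  classical
  apply le_antisymm
  · refine le_csInf ⟨_, G.splitCompletion ∅, G.isSplit_splitCompletion ∅, rfl⟩ ?_
    rintro _ ⟨G', ⟨S, hS, hSc⟩, rfl⟩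
    calc splittance G ≤ splittancePart G S.toFinset := Nat.sInf_le ⟨_, rfl⟩
      _ = (symmDiff G (G.splitCompletion S)).edgeSet.ncard := by
        rw [splittancePart_eq_ncard, Set.coe_toFinset]
      _ ≤ (symmDiff G G').edgeSet.ncard :=
        Set.ncard_le_ncard (edgeSet_mono (symmDiff_splitCompletion_le hS hSc)) (Set.toFinite _)
      _ = _ := by rw [edgeSet_symmDiff]
  · refine le_csInf ⟨_, ∅, rfl⟩ ?_
    rintro _ ⟨A, rfl⟩
    refine Nat.sInf_le ⟨_, G.isSplit_splitCompletion A, ?_⟩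
    rw [splittancePart_eq_ncard, edgeSet_symmDiff]
end

section
/- Let G_s and G_t be graphs on the same vertex set [n] with splittance(G_s) ≤ k and splittance(G_t) ≤ k, such that G_t can be obtained from G_s by a sequence of edge updates containing at most r edge deletions. Let (A_s, B_s) and (A_t, B_t) be partitions realizing the splittance of G_s and G_t, respectively. Then C(|A_s ∩ B_t|, 2) ≤ r + 2k, and in particular |A_s ∩ B_t| = O(√(r + k)). -/
open SimpleGraph Finset

/-!
Every pair of distinct vertices of `X = A_s ∩ B_t` is a non-edge of `G_s` inside `A_s`, an edge
of `G_t` inside `B_t`, or an edge of `G_s` deleted on the way to `G_t`. Counting ordered pairs,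
optimality of the two partitions bounds the first two kinds by `2k` each and the deletions bound
the third by `2r`, so `2 C(|X|, 2) ≤ 4k + 2r`. The square-root bound is then arithmetic.
-/

lemma Finset.card_filter_offDiag_eq_two_mul_card_image {α : Type*} [DecidableEq α]
    (s : Finset α) {p : α → α → Prop} [DecidableRel p] (hp : ∀ a b, p a b → p b a) :
    #{x ∈ s.offDiag | p x.1 x.2} = 2 * #({x ∈ s.offDiag | p x.1 x.2}.image Sym2.mk.uncurry) := by
  rw [card_eq_sum_card_image Sym2.mk.uncurry, mul_comm]
  refine sum_const_nat fun e he => ?_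
  obtain ⟨⟨a, b⟩, hab, rfl⟩ := mem_image.1 he
  simp only [mem_filter, mem_offDiag] at hab
  have hfiber : {x ∈ {x ∈ s.offDiag | p x.1 x.2} | Sym2.mk.uncurry x = Sym2.mk.uncurry (a, b)}
      = {(a, b), (b, a)} := by
    ext ⟨x, y⟩
    rw [mem_filter, mem_filter, mem_offDiag]
    simp only [mem_insert, mem_singleton, Function.uncurry_apply_pair, Sym2.eq_iff, Prod.mk.injEq]
    grind
  rw [hfiber, card_pair]
  simpa [Prod.ext_iff] using fun h _ => hab.1.2.2 h

lemma Finset.even_card_filter_offDiag {α : Type*} [DecidableEq α] (s : Finset α)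
    {p : α → α → Prop} [DecidableRel p] (hp : ∀ a b, p a b → p b a) :
    Even #{x ∈ s.offDiag | p x.1 x.2} :=
  ⟨_, (card_filter_offDiag_eq_two_mul_card_image s hp).trans (two_mul _)⟩

lemma Finset.card_offDiag_eq_two_mul_choose_two {α : Type*} [DecidableEq α] (s : Finset α) :
    #s.offDiag = 2 * (#s).choose 2 := by
  rw [← Sym2.card_image_offDiag, Sym2.two_mul_card_image_offDiag]

section Graph

variable {V : Type*} [Fintype V] [DecidableEq V]

lemma two_mul_splittancePart (G : SimpleGraph V) [DecidableRel G.Adj] (A : Finset V) :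
    2 * splittancePart G A
      = #{x ∈ A.offDiag | ¬G.Adj x.1 x.2} + #{x ∈ Aᶜ.offDiag | G.Adj x.1 x.2} :=
  Nat.two_mul_div_two_of_even <|
    (even_card_filter_offDiag A (p := fun a b => ¬G.Adj a b) fun _ _ h h' => h h'.symm).add
      (even_card_filter_offDiag Aᶜ (p := G.Adj) fun _ _ h => h.symm)

lemma card_offDiag_le_nonAdj_add_adj_add_sdiff (G H : SimpleGraph V) [DecidableRel G.Adj]
    [DecidableRel H.Adj] (s : Finset V) :
    #s.offDiag ≤ #{x ∈ s.offDiag | ¬G.Adj x.1 x.2} + #{x ∈ s.offDiag | H.Adj x.1 x.2}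
      + 2 * #(G.edgeFinset \ H.edgeFinset) := by
  set deleted := {x ∈ s.offDiag | G.Adj x.1 x.2 ∧ ¬H.Adj x.1 x.2}
  have hcover : s.offDiag ⊆ {x ∈ s.offDiag | ¬G.Adj x.1 x.2} ∪ {x ∈ s.offDiag | H.Adj x.1 x.2}
      ∪ deleted := by
    intro x hx
    simp only [deleted, mem_union, mem_filter]
    tauto
  have hdeleted : #deleted ≤ 2 * #(G.edgeFinset \ H.edgeFinset) := by
    rw [card_filter_offDiag_eq_two_mul_card_image s (p := fun a b => G.Adj a b ∧ ¬H.Adj a b)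
      fun _ _ h => ⟨h.1.symm, fun h' => h.2 h'.symm⟩]
    refine Nat.mul_le_mul_left 2 (card_le_card fun e he => ?_)
    obtain ⟨⟨a, b⟩, hab, rfl⟩ := mem_image.1 he
    simpa using (mem_filter.1 hab).2
  calc #s.offDiag ≤ _ := card_le_card hcover
    _ ≤ _ := (card_union_le _ _).trans (Nat.add_le_add_right (card_union_le _ _) _)
    _ ≤ _ := Nat.add_le_add_left hdeleted _

end Graph

lemma Nat.le_two_mul_sqrt_add_three_of_choose_two_le {m N : ℕ} (h : m.choose 2 ≤ 2 * N) :
    m ≤ 2 * Nat.sqrt N + 3 := by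
  by_contra! hm
  have hN := Nat.lt_succ_sqrt N
  have hmono : (2 * Nat.sqrt N + 4).choose 2 ≤ m.choose 2 := Nat.choose_le_choose 2 hm
  have hchoose : (2 * Nat.sqrt N + 4).choose 2 = (Nat.sqrt N + 2) * (2 * Nat.sqrt N + 3) := by
    rw [Nat.choose_two_right, show 2 * Nat.sqrt N + 4 - 1 = 2 * Nat.sqrt N + 3 by omega]
    exact Nat.div_eq_of_eq_mul_right two_pos (by ring)
  nlinarith

/-- If `G_s` and `G_t`, both of splittance at most `k`, differ by a sequence of edge
updates containing at most `r` edge deletions (so in particular at most `r` edges of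
`G_s` are missing from `G_t`), and `(A_s, A_sᶜ)`, `(A_t, A_tᶜ)` are optimal splittance
partitions, then `C(|A_s ∩ B_t|, 2) ≤ r + 2k`; in particular
`|A_s ∩ B_t| = O(√(r + k))`. -/
theorem intersection_bound {n : ℕ} (Gs Gt : SimpleGraph (Fin n))
    [DecidableRel Gs.Adj] [DecidableRel Gt.Adj] (k r : ℕ)
    (hks : splittance Gs ≤ k) (hkt : splittance Gt ≤ k)
    (hdel : (Gs.edgeFinset \ Gt.edgeFinset).card ≤ r)
    (As At : Finset (Fin n))
    (hAs : splittancePart Gs As = splittance Gs)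
    (hAt : splittancePart Gt At = splittance Gt) :
    ((As ∩ Atᶜ).card).choose 2 ≤ r + 2 * k ∧
      (As ∩ Atᶜ).card ≤ 2 * Nat.sqrt (r + k) + 3 := by
  set X := As ∩ Atᶜ
  have hs := two_mul_splittancePart Gs As
  have ht := two_mul_splittancePart Gt At
  have hnonAdj : #{x ∈ X.offDiag | ¬Gs.Adj x.1 x.2} ≤ #{x ∈ As.offDiag | ¬Gs.Adj x.1 x.2} :=
    card_le_card (filter_subset_filter _ (offDiag_mono inter_subset_left))
  have hadj : #{x ∈ X.offDiag | Gt.Adj x.1 x.2} ≤ #{x ∈ Atᶜ.offDiag | Gt.Adj x.1 x.2} :=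
    card_le_card (filter_subset_filter _ (offDiag_mono inter_subset_right))
  have hX := card_offDiag_le_nonAdj_add_adj_add_sdiff Gs Gt X
  have hchoose : (#X).choose 2 ≤ r + 2 * k := by
    rw [card_offDiag_eq_two_mul_choose_two] at hX
    omega
  exact ⟨hchoose, Nat.le_two_mul_sqrt_add_three_of_choose_two_le (by omega)⟩
end
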